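/- If G has a near-perfect matching and H has a maximum matching M_H, then G ⊠ H has a maximal matching M with V(G ⊠ H) \ V(M) = (V(G) \ V(M_G)) × (V(H) \ V(M_H)), where M_G is a maximum matching of G; in particular, the complement of V(M) is an independent set of size |V(G)\V(M_G)|·|V(H)\V(M_H)|. -/

import Mathlib

open SimpleGraph

variable {V : Type*} {W : Type*}

/-- The strong product of two simple graphs. -/
def strongProd (G : SimpleGraph V) (H : SimpleGraph W) : SimpleGraph (V × W) where
  Adj x y := x ≠ y ∧ (x.1 = y.1 ∨ G.Adj x.1 y.1) ∧ (x.2 = y.2 ∨ H.Adj x.2 y.2)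
  symm := ⟨fun x y ⟨hne, h1, h2⟩ =>
    ⟨hne.symm, h1.imp Eq.symm (fun h => h.symm), h2.imp Eq.symm (fun h => h.symm)⟩⟩
  loopless := ⟨fun x h => h.1 rfl⟩

/-- A dominating set: every vertex outside has a neighbor inside. -/
def IsDomSet (G : SimpleGraph V) (D : Set V) : Prop :=
  ∀ v, v ∉ D → ∃ u ∈ D, G.Adj u v

/-- A minimal dominating set. -/
def IsMinlDomSet (G : SimpleGraph V) (D : Set V) : Prop :=
  IsDomSet G D ∧ ∀ D', D' ⊂ D → ¬ IsDomSet G D'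

/-- A graph is well-dominated if every minimal dominating set has minimum cardinality. -/
def WellDominated (G : SimpleGraph V) : Prop :=
  ∀ D D' : Set V, IsMinlDomSet G D → IsDomSet G D' → D.ncard ≤ D'.ncard

/-- The domination number. -/
noncomputable def domNum (G : SimpleGraph V) : ℕ :=
  sInf {n | ∃ D : Set V, IsDomSet G D ∧ D.ncard = n}

/-- The closed neighborhood of a vertex. -/
def closedNbhd (G : SimpleGraph V) (v : V) : Set V := insert v (G.neighborSet v)

/-- `G` is trivially well-dominated via the vertices `u 0, …, u (t-1)`:
their closed neighborhoods are cliques and partition `V`. -/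
def TriviallyWellDominatedWith (G : SimpleGraph V) {t : ℕ} (u : Fin t → V) : Prop :=
  (∀ i, G.IsClique (closedNbhd G (u i))) ∧ (∀ v : V, ∃! i, v ∈ closedNbhd G (u i))

def TriviallyWellDominated (G : SimpleGraph V) : Prop :=
  ∃ (t : ℕ) (u : Fin t → V), TriviallyWellDominatedWith G u

/-- An edge dominating set: every edge of `G` not in `F` shares an endpoint
with some edge of `F`. -/
def IsEDS (G : SimpleGraph V) (F : Set (Sym2 V)) : Prop :=
  F ⊆ G.edgeSet ∧ ∀ e ∈ G.edgeSet, e ∉ F → ∃ f ∈ F, ∃ v, v ∈ e ∧ v ∈ f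

/-- A minimal edge dominating set. -/
def IsMinlEDS (G : SimpleGraph V) (F : Set (Sym2 V)) : Prop :=
  IsEDS G F ∧ ∀ F', F' ⊂ F → ¬ IsEDS G F'

/-- Well-edge-dominated: every minimal edge dominating set has minimum cardinality. -/
def WellEdgeDominated (G : SimpleGraph V) : Prop :=
  ∀ F F' : Set (Sym2 V), IsMinlEDS G F → IsEDS G F' → F.ncard ≤ F'.ncard

/-- A matching, as a set of pairwise nonadjacent edges. -/
def IsMatchingSet (G : SimpleGraph V) (M : Set (Sym2 V)) : Prop :=
  M ⊆ G.edgeSet ∧ ∀ e ∈ M, ∀ f ∈ M, e ≠ f → ∀ v : V, ¬ (v ∈ e ∧ v ∈ f)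

/-- A maximal matching. -/
def IsMaxlMatching (G : SimpleGraph V) (M : Set (Sym2 V)) : Prop :=
  IsMatchingSet G M ∧ ∀ M', M ⊆ M' → IsMatchingSet G M' → M' = M

/-- A maximum matching. -/
def IsMaxMatching (G : SimpleGraph V) (M : Set (Sym2 V)) : Prop :=
  IsMatchingSet G M ∧ ∀ M', IsMatchingSet G M' → M'.ncard ≤ M.ncard

/-- Equimatchable: every maximal matching is maximum. -/
def Equimatchable (G : SimpleGraph V) : Prop :=
  ∀ M M' : Set (Sym2 V), IsMaxlMatching G M → IsMatchingSet G M' → M'.ncard ≤ M.ncard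

/-- The set of endpoints of the edges of `M`. -/
def mVerts (M : Set (Sym2 V)) : Set V := {v | ∃ e ∈ M, v ∈ e}

/-- A perfect matching covers every vertex. -/
def IsPerfectMatchingSet (G : SimpleGraph V) (M : Set (Sym2 V)) : Prop :=
  IsMatchingSet G M ∧ ∀ v : V, v ∈ mVerts M

/-- A near-perfect matching covers all vertices but exactly one. -/
def IsNearPerfectMatchingSet (G : SimpleGraph V) (M : Set (Sym2 V)) : Prop :=
  IsMatchingSet G M ∧ ∃ w : V, mVerts M = {w}ᶜ

/-- The matching number. -/
noncomputable def matchNum (G : SimpleGraph V) : ℕ :=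
  sSup {n | ∃ M : Set (Sym2 V), IsMatchingSet G M ∧ M.ncard = n}

/-- The independence number. -/
noncomputable def indepNum (G : SimpleGraph V) : ℕ :=
  sSup {n | ∃ S : Set V, (S.Pairwise fun u v => ¬ G.Adj u v) ∧ S.ncard = n}

/-- `G` with a set of vertices deleted (induced subgraph on the complement). -/
abbrev delVerts (G : SimpleGraph V) (S : Set V) : SimpleGraph ↥(Sᶜ) := G.induce Sᶜ

/-- Factor-critical: deleting any vertex leaves a graph with a perfect matching. -/
def FactorCritical (G : SimpleGraph V) : Prop :=
  ∀ v : V, ∃ M, IsPerfectMatchingSet (delVerts G {v}) M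

/-- 2-connected: at least three vertices, connected, and no cutvertex. -/
def TwoConnected (G : SimpleGraph V) [Fintype V] : Prop :=
  3 ≤ Fintype.card V ∧ G.Connected ∧ ∀ v : V, (delVerts G {v}).Connected

/-!
The matching consists of a copy of `M_H` in every `H`-fibre `{u} × W`, together with a copy of
`M_G` in every `G`-fibre `V × {v}` with `v` left uncovered by `M_H`; it leaves uncovered exactly
the pairs of uncovered vertices. A product of independent sets is independent in the strong
product, and the uncovered vertices of a maximum matching (or the single uncovered vertex of a
near-perfect one) form an independent set, so no edge can be added: the matching is maximal.
-/

section Matching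

variable {G : SimpleGraph V} {M : Set (Sym2 V)}

lemma IsMatchingSet.eq_of_mem (hM : IsMatchingSet G M) {e f : Sym2 V} (he : e ∈ M) (hf : f ∈ M)
    {v : V} (hve : v ∈ e) (hvf : v ∈ f) : e = f := by
  by_contra hef
  exact hM.2 e he f hf hef v ⟨hve, hvf⟩

lemma IsMatchingSet.insert (hM : IsMatchingSet G M) {a b : V} (hab : G.Adj a b)
    (ha : a ∉ mVerts M) (hb : b ∉ mVerts M) : IsMatchingSet G (insert s(a, b) M) := by
  have hfree : ∀ v ∈ s(a, b), ∀ f ∈ M, v ∉ f := by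
    intro v hv f hf hvf
    rcases Sym2.mem_iff.mp hv with rfl | rfl
    exacts [ha ⟨f, hf, hvf⟩, hb ⟨f, hf, hvf⟩]
  refine ⟨Set.insert_subset hab hM.1, ?_⟩
  rintro e (rfl | he) f (rfl | hf) hef v ⟨hve, hvf⟩
  · exact hef rfl
  · exact hfree v hve f hf hvf
  · exact hfree v hvf e he hve
  · exact hM.2 e he f hf hef v ⟨hve, hvf⟩

lemma IsMaxMatching.isIndepSet_compl_mVerts [Finite V] (hM : IsMaxMatching G M) :
    G.IsIndepSet (mVerts M)ᶜ := by
  intro a ha b hb _ hab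
  have hnew : s(a, b) ∉ M := fun h => ha ⟨_, h, Sym2.mem_mk_left _ _⟩
  have hle := hM.2 _ (hM.1.insert hab ha hb)
  rw [Set.ncard_insert_of_notMem hnew] at hle
  omega

lemma IsMatchingSet.isMaxlMatching_of_isIndepSet (hM : IsMatchingSet G M)
    (hind : G.IsIndepSet (mVerts M)ᶜ) : IsMaxlMatching G M := by
  refine ⟨hM, fun M' hsub hM' => (Set.Subset.antisymm hsub fun e he => ?_).symm⟩
  by_contra heM
  have hfree : ∀ v ∈ e, v ∈ (mVerts M)ᶜ := by
    rintro v hv ⟨f, hf, hvf⟩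
    exact heM (hM'.eq_of_mem he (hsub hf) hv hvf ▸ hf)
  induction e using Sym2.ind with
  | h a b =>
    have hab : G.Adj a b := hM'.1 he
    exact hind (hfree a (Sym2.mem_mk_left _ _)) (hfree b (Sym2.mem_mk_right _ _)) hab.ne hab

end Matching

section StrongProduct

variable {G : SimpleGraph V} {H : SimpleGraph W}

lemma strongProd_adj_left {a a' : V} (h : G.Adj a a') (b : W) :
    (strongProd G H).Adj (a, b) (a', b) :=
  ⟨fun e => h.ne (congrArg Prod.fst e), Or.inr h, Or.inl rfl⟩

lemma strongProd_adj_right (a : V) {b b' : W} (h : H.Adj b b') :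
    (strongProd G H).Adj (a, b) (a, b') :=
  ⟨fun e => h.ne (congrArg Prod.snd e), Or.inl rfl, Or.inr h⟩

lemma SimpleGraph.IsIndepSet.prod_strongProd {S : Set V} {T : Set W} (hS : G.IsIndepSet S)
    (hT : H.IsIndepSet T) : (strongProd G H).IsIndepSet (S ×ˢ T) := by
  rintro x ⟨hx₁, hx₂⟩ y ⟨hy₁, hy₂⟩ _ ⟨hne, h₁, h₂⟩
  have e₁ : x.1 = y.1 := h₁.resolve_right fun h => hS hx₁ hy₁ h.ne h
  have e₂ : x.2 = y.2 := h₂.resolve_right fun h => hT hx₂ hy₂ h.ne h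
  exact hne (Prod.ext e₁ e₂)

lemma Sym2.mem_map_prodMk_left {u : V} {e : Sym2 W} {x : V × W} :
    x ∈ e.map (Prod.mk u) ↔ x.1 = u ∧ x.2 ∈ e := by
  rw [Sym2.mem_map]
  constructor
  · rintro ⟨b, hb, rfl⟩
    exact ⟨rfl, hb⟩
  · rintro ⟨h, hx⟩
    exact ⟨x.2, hx, Prod.ext h.symm rfl⟩

lemma Sym2.mem_map_prodMk_right {b : W} {e : Sym2 V} {x : V × W} :
    x ∈ e.map (·, b) ↔ x.2 = b ∧ x.1 ∈ e := by
  rw [Sym2.mem_map]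
  constructor
  · rintro ⟨a, ha, rfl⟩
    exact ⟨rfl, ha⟩
  · rintro ⟨h, hx⟩
    exact ⟨x.1, hx, Prod.ext rfl h.symm⟩

/-- The first disjunct describes `M_1`, the second `M_2`. -/
def strongProdMatching (MG : Set (Sym2 V)) (MH : Set (Sym2 W)) : Set (Sym2 (V × W)) :=
  {e | (∃ u, ∃ f ∈ MH, e = f.map (Prod.mk u)) ∨ ∃ b ∉ mVerts MH, ∃ f ∈ MG, e = f.map (·, b)}

variable {MG : Set (Sym2 V)} {MH : Set (Sym2 W)}

lemma mem_mVerts_strongProdMatching {x : V × W} :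
    x ∈ mVerts (strongProdMatching MG MH) ↔ x.2 ∈ mVerts MH ∨ x.1 ∈ mVerts MG := by
  constructor
  · rintro ⟨e, ⟨u, f, hf, rfl⟩ | ⟨b, -, f, hf, rfl⟩, hx⟩
    · exact .inl ⟨f, hf, (Sym2.mem_map_prodMk_left.mp hx).2⟩
    · exact .inr ⟨f, hf, (Sym2.mem_map_prodMk_right.mp hx).2⟩
  · rintro (⟨f, hf, hx⟩ | ⟨f, hf, hx⟩)
    · exact ⟨_, .inl ⟨x.1, f, hf, rfl⟩, Sym2.mem_map_prodMk_left.mpr ⟨rfl, hx⟩⟩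
    · by_cases hx₂ : x.2 ∈ mVerts MH
      · obtain ⟨f', hf', hx'⟩ := hx₂
        exact ⟨_, .inl ⟨x.1, f', hf', rfl⟩, Sym2.mem_map_prodMk_left.mpr ⟨rfl, hx'⟩⟩
      · exact ⟨_, .inr ⟨x.2, hx₂, f, hf, rfl⟩, Sym2.mem_map_prodMk_right.mpr ⟨rfl, hx⟩⟩

lemma compl_mVerts_strongProdMatching :
    (mVerts (strongProdMatching MG MH))ᶜ = (mVerts MG)ᶜ ×ˢ (mVerts MH)ᶜ := by
  ext x
  simp only [Set.mem_compl_iff, Set.mem_prod, mem_mVerts_strongProdMatching, not_or, and_comm]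

lemma IsMatchingSet.strongProdMatching (hMG : IsMatchingSet G MG) (hMH : IsMatchingSet H MH) :
    IsMatchingSet (strongProd G H) (strongProdMatching MG MH) := by
  constructor
  · rintro e (⟨u, f, hf, rfl⟩ | ⟨b, -, f, hf, rfl⟩)
    · induction f using Sym2.ind with
      | h b b' => exact strongProd_adj_right u (hMH.1 hf)
    · induction f using Sym2.ind with
      | h a a' => exact strongProd_adj_left (hMG.1 hf) b
  · rintro e (⟨u, f, hf, rfl⟩ | ⟨b, hb, f, hf, rfl⟩) e' (⟨u', f', hf', rfl⟩ | ⟨b', hb', f', hf', rfl⟩)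
      hne x ⟨hx, hx'⟩
    · rw [Sym2.mem_map_prodMk_left] at hx hx'
      rw [← hx.1, ← hx'.1, hMH.eq_of_mem hf hf' hx.2 hx'.2] at hne
      exact hne rfl
    · rw [Sym2.mem_map_prodMk_left] at hx
      rw [Sym2.mem_map_prodMk_right] at hx'
      exact hb' (hx'.1 ▸ ⟨f, hf, hx.2⟩)
    · rw [Sym2.mem_map_prodMk_right] at hx
      rw [Sym2.mem_map_prodMk_left] at hx'
      exact hb (hx.1 ▸ ⟨f', hf', hx'.2⟩)
    · rw [Sym2.mem_map_prodMk_right] at hx hx'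
      rw [← hx.1, ← hx'.1, hMG.eq_of_mem hf hf' hx.2 hx'.2] at hne
      exact hne rfl

end StrongProduct

theorem stmt18_general [Fintype W] (G : SimpleGraph V) (H : SimpleGraph W)
    (MG : Set (Sym2 V)) (hMGnp : IsNearPerfectMatchingSet G MG)
    (MH : Set (Sym2 W)) (hMH : IsMaxMatching H MH) :
    ∃ M : Set (Sym2 (V × W)), IsMaxlMatching (strongProd G H) M ∧
      (mVerts M)ᶜ = (mVerts MG)ᶜ ×ˢ (mVerts MH)ᶜ ∧
      ((mVerts M)ᶜ.Pairwise fun a b => ¬ (strongProd G H).Adj a b) ∧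
      (mVerts M)ᶜ.ncard = (mVerts MG)ᶜ.ncard * (mVerts MH)ᶜ.ncard := by
  obtain ⟨hMG, w, hw⟩ := hMGnp
  have hindG : G.IsIndepSet (mVerts MG)ᶜ := by
    rw [hw, compl_compl]
    exact Set.pairwise_singleton w _
  have hcompl := compl_mVerts_strongProdMatching (MG := MG) (MH := MH)
  have hind : (strongProd G H).IsIndepSet (mVerts (strongProdMatching MG MH))ᶜ :=
    hcompl ▸ hindG.prod_strongProd hMH.isIndepSet_compl_mVerts
  refine ⟨_, (hMG.strongProdMatching hMH.1).isMaxlMatching_of_isIndepSet hind, hcompl, hind, ?_⟩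
  rw [hcompl, Set.ncard_prod]

theorem stmt18 [Fintype V] [Fintype W] (G : SimpleGraph V) (H : SimpleGraph W)
    (MG : Set (Sym2 V)) (hMG : IsMaxMatching G MG) (hMGnp : IsNearPerfectMatchingSet G MG)
    (MH : Set (Sym2 W)) (hMH : IsMaxMatching H MH) :
    ∃ M : Set (Sym2 (V × W)), IsMaxlMatching (strongProd G H) M ∧
      (mVerts M)ᶜ = (mVerts MG)ᶜ ×ˢ (mVerts MH)ᶜ ∧
      ((mVerts M)ᶜ.Pairwise fun a b => ¬ (strongProd G H).Adj a b) ∧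
      (mVerts M)ᶜ.ncard = (mVerts MG)ᶜ.ncard * (mVerts MH)ᶜ.ncard :=
  stmt18_general G H MG hMGnp MH hMH
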